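/- arXiv:2502.19933 — 2 statements merged into one kernel-verified Lean document; each statement's English description precedes it below -/
import Mathlib

section
/- Let x* ∈ ℝ^{2n} consist of n stacked 2-vectors x*_1, …, x*_n that are not all collinear (not all contained in a common line through a point). Define the tangent space T = { (I_n ⊗ L)x* : L ∈ 𝔰𝔬(2) } + { 𝟙_n ⊗ v : v ∈ ℝ² }. Then dim T = 3. -/
open Matrix

noncomputable section

/-- Blockwise action of a 2×2 matrix `A` on `x ∈ ℝ^{2n}`: `(I_n ⊗ A) x`. -/
def blockAct (n : ℕ) (A : Matrix (Fin 2) (Fin 2) ℝ)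
    (x : EuclideanSpace ℝ (Fin n × Fin 2)) : EuclideanSpace ℝ (Fin n × Fin 2) :=
  WithLp.toLp 2 (fun p : Fin n × Fin 2 => ∑ b : Fin 2, A p.2 b * x (p.1, b))

/-- The vector `𝟙_n ⊗ v ∈ ℝ^{2n}`: every 2-block equals `v`. -/
def onesVec (n : ℕ) (v : Fin 2 → ℝ) : EuclideanSpace ℝ (Fin n × Fin 2) :=
  WithLp.toLp 2 (fun p : Fin n × Fin 2 => v p.2)

/-- `T_R(x) = { (I_n ⊗ L) x : L ∈ 𝔰𝔬(2) }` as a subspace (it is the span of that set). -/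
def rotTangent (n : ℕ) (x : EuclideanSpace ℝ (Fin n × Fin 2)) :
    Submodule ℝ (EuclideanSpace ℝ (Fin n × Fin 2)) :=
  Submodule.span ℝ {y | ∃ L : Matrix (Fin 2) (Fin 2) ℝ, Lᵀ = -L ∧ y = blockAct n L x}

/-- `T_v = { 𝟙_n ⊗ v : v ∈ ℝ² }` as a subspace. -/
def transTangent (n : ℕ) : Submodule ℝ (EuclideanSpace ℝ (Fin n × Fin 2)) :=
  Submodule.span ℝ {y | ∃ v : Fin 2 → ℝ, y = onesVec n v}

def Jmat : Matrix (Fin 2) (Fin 2) ℝ := !![0, -1; 1, 0]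

lemma skew_eq (L : Matrix (Fin 2) (Fin 2) ℝ) (hL : Lᵀ = -L) :
    L = (L 1 0) • Jmat := by
  have h : ∀ i j, L j i = - L i j := by
    intro i j
    have := congrFun (congrFun hL i) j
    simpa [Matrix.transpose_apply] using this
  have h00 : L 0 0 = 0 := by have := h 0 0; linarith
  have h11 : L 1 1 = 0 := by have := h 1 1; linarith
  have h01 : L 0 1 = - L 1 0 := by have := h 1 0; linarith
  ext i j
  fin_cases i <;> fin_cases j <;>
    simp [Jmat, h00, h11, h01, Matrix.smul_apply]

lemma blockAct_smul (n : ℕ) (c : ℝ) (A : Matrix (Fin 2) (Fin 2) ℝ)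
    (x : EuclideanSpace ℝ (Fin n × Fin 2)) :
    blockAct n (c • A) x = c • blockAct n A x := by
  ext p
  simp [blockAct, PiLp.smul_apply, Finset.mul_sum, Matrix.smul_apply, mul_assoc, mul_add]

/-- If the stacked 2-vectors of `x*` are not all collinear, then the tangent space
`T = {(I_n⊗L)x* : L ∈ 𝔰𝔬(2)} + {𝟙_n⊗v : v ∈ ℝ²}` has dimension 3. -/
theorem tangent_space_dim_three (n : ℕ) (xs : EuclideanSpace ℝ (Fin n × Fin 2))
    (hnc : ¬ ∃ p d : Fin 2 → ℝ, ∀ i : Fin n, ∃ t : ℝ,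
      ∀ a : Fin 2, xs (i, a) = p a + t * d a) :
    Module.finrank ℝ ↥(rotTangent n xs ⊔ transTangent n) = 3 := by
  have hn : 0 < n := by
    rcases Nat.eq_zero_or_pos n with h | h
    · exfalso; apply hnc
      subst h
      exact ⟨0, 0, fun i => i.elim0⟩
    · exact h
  set r : EuclideanSpace ℝ (Fin n × Fin 2) := blockAct n Jmat xs with hr
  set u : Fin 2 → EuclideanSpace ℝ (Fin n × Fin 2) := fun a => onesVec n (Pi.single a 1) with hu
  -- rotTangent = span {r}
  have hrot : rotTangent n xs = Submodule.span ℝ {r} := by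
    apply le_antisymm
    · rw [rotTangent, Submodule.span_le]
      rintro y ⟨L, hL, rfl⟩
      rw [skew_eq L hL, blockAct_smul]
      exact Submodule.smul_mem _ _ (Submodule.mem_span_singleton_self r)
    · rw [Submodule.span_le]
      rintro y rfl
      apply Submodule.subset_span
      refine ⟨Jmat, ?_, rfl⟩
      ext i j
      fin_cases i <;> fin_cases j <;> simp [Jmat]
  -- transTangent = span {u 0, u 1}
  have honesdecomp : ∀ v : Fin 2 → ℝ, onesVec n v = v 0 • u 0 + v 1 • u 1 := by
    intro v
    ext p
    obtain ⟨i, a⟩ := p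
    fin_cases a <;> simp [onesVec, hu, Pi.single, PiLp.add_apply, PiLp.smul_apply]
  have htrans : transTangent n = Submodule.span ℝ {u 0, u 1} := by
    apply le_antisymm
    · rw [transTangent, Submodule.span_le]
      rintro y ⟨v, rfl⟩
      rw [honesdecomp]
      exact Submodule.add_mem _
        (Submodule.smul_mem _ _ (Submodule.subset_span (by simp)))
        (Submodule.smul_mem _ _ (Submodule.subset_span (by simp)))
    · rw [Submodule.span_le]
      rintro y hy
      rcases hy with rfl | rfl <;> exact Submodule.subset_span ⟨_, rfl⟩
  have hsup : rotTangent n xs ⊔ transTangent n = Submodule.span ℝ {r, u 0, u 1} := by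
    rw [hrot, htrans, ← Submodule.span_union, Set.singleton_union]
  rw [hsup]
  have hrange : Set.range ![r, u 0, u 1] = {r, u 0, u 1} := by
    ext y
    simp only [Matrix.range_cons, Matrix.range_empty, Set.union_empty,
      Set.mem_insert_iff, Set.mem_singleton_iff, Set.mem_range, Set.mem_union]
  rw [← hrange]
  have hli : LinearIndependent ℝ ![r, u 0, u 1] := by
    rw [Fintype.linearIndependent_iff]
    intro g hg
    have hg' : g 0 • r + g 1 • u 0 + g 2 • u 1 = 0 := by
      simpa [Fin.sum_univ_three] using hg
    have key : ∀ (i : Fin n) (a : Fin 2),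
        g 0 * r (i, a) + g 1 * (u 0) (i, a) + g 2 * (u 1) (i, a) = 0 := by
      intro i a
      have := congrArg (fun w => w (i, a)) hg'
      simpa [PiLp.add_apply, PiLp.smul_apply] using this
    have rval0 : ∀ i : Fin n, r (i, 0) = - xs (i, 1) := by
      intro i
      simp [hr, blockAct, Jmat, Fin.sum_univ_two]
    have rval1 : ∀ i : Fin n, r (i, 1) = xs (i, 0) := by
      intro i
      simp [hr, blockAct, Jmat, Fin.sum_univ_two]
    have uval : ∀ (b a : Fin 2) (i : Fin n), (u b) (i, a) = if a = b then 1 else 0 := by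
      intro b a i
      simp [hu, onesVec, Pi.single_apply]
    have eq1 : ∀ i : Fin n, g 0 * (- xs (i, 1)) + g 1 = 0 := by
      intro i
      have := key i 0
      rw [rval0 i, uval 0 0 i, uval 1 0 i] at this
      simpa using this
    have eq2 : ∀ i : Fin n, g 0 * xs (i, 0) + g 2 = 0 := by
      intro i
      have := key i 1
      rw [rval1 i, uval 0 1 i, uval 1 1 i] at this
      simpa using this
    have hg0 : g 0 = 0 := by
      by_contra hc
      apply hnc
      refine ⟨fun a => if a = 0 then -(g 2) / g 0 else g 1 / g 0, 0, fun i => ⟨0, fun a => ?_⟩⟩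
      fin_cases a
      · have := eq2 i
        simp
        field_simp
        linarith
      · have := eq1 i
        simp
        field_simp
        linarith
    have i0 : Fin n := ⟨0, hn⟩
    have hg1 : g 1 = 0 := by have := eq1 i0; rw [hg0] at this; linarith
    have hg2 : g 2 = 0 := by have := eq2 i0; rw [hg0] at this; linarith
    intro i
    fin_cases i <;> assumption
  have := finrank_span_eq_card hli
  simpa using this
end
end

section
/- Let θ = (m−1)π/m with m ≥ 3 odd, α₁, α₂ > 0, r = (α₂(1−cos θ)/(4α₁ sin(θ/2)))^{1/3}. Then α₁ + α₁ · sin³θ (1 + 3 cos θ)/(4 sin⁵(θ/2)) > 0; i.e., the diagonal Hessian entry α₁ + α₂ Σ_{k∈N} (2(Δ₂)² − (Δ₁)²)/‖Δ‖⁵ evaluated at the equilibrium radius is strictly positive. -/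
open Real

/-- For odd `m ≥ 3`, `θ = (m−1)π/m`, and `α₁ > 0`, the diagonal Hessian entry at the
equilibrium radius is strictly positive:
`α₁ + α₁ · sin³θ (1 + 3 cos θ)/(4 sin⁵(θ/2)) > 0`. -/
theorem diagonal_hessian_entry_pos (m : ℕ) (hodd : Odd m) (hm : 3 ≤ m)
    (θ : ℝ) (hθ : θ = ((m : ℝ) - 1) * π / m)
    (α₁ : ℝ) (hα₁ : 0 < α₁) :
    0 < α₁ + α₁ * sin θ ^ 3 * (1 + 3 * cos θ) / (4 * sin (θ / 2) ^ 5) := by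
  have hm3 : (3:ℝ) ≤ (m:ℝ) := by exact_mod_cast hm
  have hmpos : (0:ℝ) < (m:ℝ) := by linarith
  have hpi := Real.pi_pos
  set x := π / (2 * (m:ℝ)) with hx
  have hθx : θ = π - 2 * x := by
    rw [hθ, hx]; field_simp
  have hx0 : 0 < x := by rw [hx]; positivity
  have hx6 : x ≤ π / 6 := by
    rw [hx, div_le_div_iff₀ (by positivity) (by norm_num)]
    nlinarith
  have hxlt : x < π / 2 := by linarith
  have hs0 : 0 < sin x := sin_pos_of_pos_of_lt_pi hx0 (by linarith)
  have hc0 : 0 < cos x := cos_pos_of_mem_Ioo ⟨by linarith, hxlt⟩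
  have hs : sin x ≤ 1 / 2 := by
    have h1 : sin x ≤ sin (π / 6) := by
      apply Real.strictMonoOn_sin.monotoneOn ⟨by linarith, le_of_lt hxlt⟩
        ⟨by linarith, by linarith⟩ hx6
    rwa [Real.sin_pi_div_six] at h1
  have hθ2 : θ / 2 = π / 2 - x := by rw [hθx]; ring
  have hsinθ2 : sin (θ / 2) = cos x := by rw [hθ2, Real.sin_pi_div_two_sub]
  have hsinθ : sin θ = 2 * sin x * cos x := by
    rw [hθx, Real.sin_pi_sub, Real.sin_two_mul]
  have hcosθ : cos θ = 2 * sin x ^ 2 - 1 := by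
    have h := Real.sin_sq_add_cos_sq x
    rw [hθx, Real.cos_pi_sub, Real.cos_two_mul]; linarith
  set s := sin x
  set c := cos x
  have hsc : s ^ 2 + c ^ 2 = 1 := by
    rw [add_comm]; exact Real.cos_sq_add_sin_sq x
  have key : 0 < c ^ 2 + 2 * s ^ 3 * (6 * s ^ 2 - 2) := by
    nlinarith [mul_pos hs0 hs0, mul_pos (mul_pos hs0 hs0) hs0, sq_nonneg s,
      mul_nonneg (mul_nonneg (le_of_lt hs0) (le_of_lt hs0)) (sub_nonneg.mpr hs),
      mul_nonneg (mul_nonneg (mul_nonneg (le_of_lt hs0) (le_of_lt hs0)) (le_of_lt hs0))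
        (sub_nonneg.mpr hs)]
  have heq : α₁ + α₁ * sin θ ^ 3 * (1 + 3 * cos θ) / (4 * sin (θ / 2) ^ 5)
      = α₁ * (c ^ 2 + 2 * s ^ 3 * (6 * s ^ 2 - 2)) / c ^ 2 := by
    rw [hsinθ2, hsinθ, hcosθ]
    field_simp
    ring
  rw [heq]
  exact div_pos (mul_pos hα₁ key) (by positivity)
end
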